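/- arXiv:2109.04525 — 4 statements merged into one kernel-verified Lean document; each statement's English description precedes it below -/
import Mathlib

section
/- Let f : {-1,1}^n → {0,1}, let S ⊆ [n], and for an assignment x_{S̄} ∈ {-1,1}^{[n]∖S} let f_{S|x_{S̄}} denote the restriction of f to the free variables S. Then |f̂(S)| ≤ Pr_{x_{S̄} uniform}[DT(f_{S|x_{S̄}}) = |S|]. -/
open Finset

noncomputable section

/-- The character `χ_S(x) = ∏_{i ∈ S} x_i`, where `x i = true` encodes `-1`. -/
def chi {n : ℕ} (S : Finset (Fin n)) (x : Fin n → Bool) : ℝ :=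
  ∏ i ∈ S, (if x i then (-1 : ℝ) else 1)

/-- Fourier coefficient `f̂(S) = E_x [f(x) χ_S(x)]` over uniform `x ∈ {-1,1}^n`. -/
def fhat {n : ℕ} (f : (Fin n → Bool) → ℝ) (S : Finset (Fin n)) : ℝ :=
  (∑ x : Fin n → Bool, f x * chi S x) / 2 ^ n

/-- View a `{0,1}`-valued Boolean function as real-valued. -/
def bToR (b : Bool) : ℝ := if b then 1 else 0

open scoped Classical in
/-- Probability of an event under the uniform distribution on `{-1,1}^n`. -/
def pr {n : ℕ} (P : (Fin n → Bool) → Prop) : ℝ :=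
  ((Finset.univ.filter P).card : ℝ) / 2 ^ n

end
/-- Binary decision trees querying variables in `Fin n`. -/
inductive DTree (n : ℕ) : Type where
  | leaf : Bool → DTree n
  | node : Fin n → DTree n → DTree n → DTree n

def DTree.eval {n : ℕ} : DTree n → (Fin n → Bool) → Bool
  | .leaf b, _ => b
  | .node i t₁ t₀, x => if x i then t₁.eval x else t₀.eval x

def DTree.depth {n : ℕ} : DTree n → ℕ
  | .leaf _ => 0
  | .node _ t₁ t₀ => max t₁.depth t₀.depth + 1

/-- Decision tree depth of a Boolean function: least depth of a tree computing it. -/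
noncomputable def DT {n : ℕ} (g : (Fin n → Bool) → Bool) : ℕ :=
  sInf {d | ∃ t : DTree n, (∀ x, t.eval x = g x) ∧ t.depth ≤ d}

/-- Restriction of `f` with free variables `S`, the others fixed according to `xbar`. -/
def restrict {n : ℕ} (f : (Fin n → Bool) → Bool) (S : Finset (Fin n))
    (xbar : Fin n → Bool) : (Fin n → Bool) → Bool :=
  fun xS => f (fun i => if i ∈ S then xS i else xbar i)

/-
Averaging over the fixed coordinates, `f̂(S)` is the mean of the top Fourier coefficients
`(f_{S|x_{S̄}})^(S)` of the restrictions. Each has absolute value at most `1`, and it vanishes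
when the restriction has a decision tree of depth `< |S|`: splitting on the queried variable
`x_i` writes the coefficient at `S` through coefficients of the subtrees at sets of size
`≥ |S| - 1`, so by induction on the tree all of them vanish.
-/

lemma abs_chi {n : ℕ} (S : Finset (Fin n)) (x : Fin n → Bool) : |chi S x| = 1 := by
  rw [chi, abs_prod]
  exact prod_eq_one fun i _ => by split <;> simp

lemma sum_chi_eq_zero {n : ℕ} {S : Finset (Fin n)} (hS : S.Nonempty) :
    ∑ x : Fin n → Bool, chi S x = 0 := by
  obtain ⟨i, hi⟩ := hS
  have hchi : ∀ x, chi S x = ∏ j, if j ∈ S then (if x j then (-1 : ℝ) else 1) else 1 := by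
    intro x; rw [chi, prod_ite_mem, univ_inter]
  simp_rw [hchi]
  rw [← Fintype.prod_sum (fun j (b : Bool) => if j ∈ S then (if b then (-1 : ℝ) else 1) else 1)]
  exact prod_eq_zero (mem_univ i) (by simp [hi])

lemma exists_chi_eq_sign_mul {n : ℕ} (S : Finset (Fin n)) (i : Fin n) :
    ∃ T : Finset (Fin n), S.card ≤ T.card + 1 ∧
      ∀ x, chi T x = (if x i then -1 else 1) * chi S x := by
  by_cases hi : i ∈ S
  · refine ⟨S.erase i, (card_erase_add_one hi).ge, fun x => ?_⟩
    simp only [chi]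
    rw [← mul_prod_erase S _ hi, ← mul_assoc]
    split <;> simp
  · exact ⟨insert i S, by rw [card_insert_of_notMem hi]; omega, fun x => prod_insert hi⟩

lemma fhat_const {n : ℕ} (c : ℝ) {S : Finset (Fin n)} (hS : S.Nonempty) :
    fhat (fun _ => c) S = 0 := by
  rw [fhat, ← mul_sum, sum_chi_eq_zero hS, mul_zero, zero_div]

lemma abs_fhat_le_one {n : ℕ} {F : (Fin n → Bool) → ℝ} (hF : ∀ x, |F x| ≤ 1)
    (S : Finset (Fin n)) : |fhat F S| ≤ 1 := by
  rw [fhat, abs_div, abs_of_pos (by positivity : (0 : ℝ) < 2 ^ n), div_le_one (by positivity)]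
  calc |∑ x, F x * chi S x| ≤ ∑ x, |F x * chi S x| := abs_sum_le_sum_abs _ _
    _ ≤ ∑ _x : Fin n → Bool, (1 : ℝ) :=
        sum_le_sum fun x _ => by rw [abs_mul, abs_chi, mul_one]; exact hF x
    _ = 2 ^ n := by simp

lemma abs_bToR_le_one (b : Bool) : |bToR b| ≤ 1 := by
  cases b <;> simp [bToR]

-- `(if x i then g else h) = (g + h) / 2 + x_i (h - g) / 2`, and `x_i χ_S = χ_T`
-- with `|T| ≥ |S| - 1`.
lemma exists_fhat_ite {n : ℕ} (g h : (Fin n → Bool) → ℝ) (i : Fin n) (S : Finset (Fin n)) :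
    ∃ T : Finset (Fin n), S.card ≤ T.card + 1 ∧
      fhat (fun x => if x i then g x else h x) S
        = (fhat g S + fhat h S - fhat g T + fhat h T) / 2 := by
  obtain ⟨T, hcard, hT⟩ := exists_chi_eq_sign_mul S i
  refine ⟨T, hcard, ?_⟩
  have hpoint : ∀ x, (if x i then g x else h x) * chi S x
      = (g x * chi S x + h x * chi S x - g x * chi T x + h x * chi T x) / 2 := by
    intro x; rw [hT]; split <;> ring
  simp only [fhat, hpoint, ← sum_div, sum_add_distrib, sum_sub_distrib]
  ring

lemma fhat_dtree_eq_zero {n : ℕ} (t : DTree n) {S : Finset (Fin n)} (hS : t.depth < S.card) :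
    fhat (fun x => bToR (t.eval x)) S = 0 := by
  induction t generalizing S with
  | leaf b => exact fhat_const (bToR b) (card_pos.mp (by simpa [DTree.depth] using hS))
  | node i t₁ t₀ ih₁ ih₀ =>
    simp only [DTree.depth] at hS
    have heval : ∀ x, bToR ((DTree.node i t₁ t₀).eval x)
        = if x i then bToR (t₁.eval x) else bToR (t₀.eval x) := by
      intro x; simp only [DTree.eval]; split <;> rfl
    obtain ⟨T, hcard, hsplit⟩ :=
      exists_fhat_ite (fun x => bToR (t₁.eval x)) (fun x => bToR (t₀.eval x)) i S
    simp only [heval, hsplit, ih₁ (by omega : t₁.depth < S.card),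
      ih₀ (by omega : t₀.depth < S.card), ih₁ (by omega : t₁.depth < T.card),
      ih₀ (by omega : t₀.depth < T.card)]
    norm_num

def DTree.ofList {n : ℕ} : List (Fin n) → ((Fin n → Bool) → Bool) → DTree n
  | [], g => .leaf (g fun _ => false)
  | i :: L, g => .node i (ofList L fun x => g (Function.update x i true))
                         (ofList L fun x => g (Function.update x i false))

lemma DTree.eval_ofList {n : ℕ} (L : List (Fin n)) (g : (Fin n → Bool) → Bool)
    (x : Fin n → Bool) : (ofList L g).eval x = g (fun i => if i ∈ L then x i else false) := by
  induction L generalizing g with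
  | nil => simp [ofList, eval]
  | cons i L ih =>
    simp only [ofList, eval]
    split <;> rw [ih] <;> congr 1 <;> funext j <;> by_cases hj : j = i <;> simp_all

lemma DTree.depth_ofList {n : ℕ} (L : List (Fin n)) (g : (Fin n → Bool) → Bool) :
    (ofList L g).depth = L.length := by
  induction L generalizing g with
  | nil => rfl
  | cons i L ih => simp [ofList, depth, ih]

lemma DT_le_depth {n : ℕ} {g : (Fin n → Bool) → Bool} (t : DTree n) (ht : ∀ x, t.eval x = g x) :
    DT g ≤ t.depth :=
  Nat.sInf_le ⟨t, ht, le_rfl⟩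

lemma exists_dtree_depth_le_DT {n : ℕ} (g : (Fin n → Bool) → Bool) :
    ∃ t : DTree n, (∀ x, t.eval x = g x) ∧ t.depth ≤ DT g :=
  Nat.sInf_mem (s := {d | ∃ t : DTree n, (∀ x, t.eval x = g x) ∧ t.depth ≤ d})
    ⟨n, DTree.ofList (List.finRange n) g, fun x => by simp [DTree.eval_ofList],
      by simp [DTree.depth_ofList]⟩

lemma DT_restrict_le {n : ℕ} (f : (Fin n → Bool) → Bool) (S : Finset (Fin n))
    (xbar : Fin n → Bool) : DT (restrict f S xbar) ≤ S.card := by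
  refine (DT_le_depth (DTree.ofList S.toList (restrict f S xbar)) fun x => ?_).trans
    (by simp [DTree.depth_ofList])
  simp only [DTree.eval_ofList, _root_.restrict, mem_toList]
  congr 1
  funext j
  split <;> simp_all

lemma fhat_eq_zero_of_DT_lt {n : ℕ} {g : (Fin n → Bool) → Bool} {S : Finset (Fin n)}
    (h : DT g < S.card) : fhat (fun x => bToR (g x)) S = 0 := by
  obtain ⟨t, ht, hdepth⟩ := exists_dtree_depth_le_DT g
  simp_rw [← ht]
  exact fhat_dtree_eq_zero t (hdepth.trans_lt h)

lemma chi_piecewise {n : ℕ} (S : Finset (Fin n)) (x y : Fin n → Bool) :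
    chi S (S.piecewise x y) = chi S x :=
  prod_congr rfl fun i hi => by rw [piecewise_eq_of_mem _ _ _ hi]

/-- `(x, y) ↦ (x_S y_{S̄}, y_S x_{S̄})` is an involution of pairs, so the first component of its
image is uniformly distributed. -/
lemma sum_sum_piecewise {n : ℕ} (S : Finset (Fin n)) (G : (Fin n → Bool) → ℝ) :
    ∑ y : Fin n → Bool, ∑ x : Fin n → Bool, G (S.piecewise x y) = 2 ^ n * ∑ z, G z := by
  have hswap : Function.Involutive fun p : (Fin n → Bool) × (Fin n → Bool) =>
      (S.piecewise p.1 p.2, S.piecewise p.2 p.1) := by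
    intro p
    ext j <;> by_cases hj : j ∈ S <;> simp [hj]
  calc ∑ y : Fin n → Bool, ∑ x : Fin n → Bool, G (S.piecewise x y)
      = ∑ p : (Fin n → Bool) × (Fin n → Bool), G (S.piecewise p.1 p.2) := by
        rw [Fintype.sum_prod_type_right]
    _ = ∑ p : (Fin n → Bool) × (Fin n → Bool), G p.1 :=
        Fintype.sum_bijective _ hswap.bijective _ _ fun _ => rfl
    _ = 2 ^ n * ∑ z, G z := by
        simp [Fintype.sum_prod_type, mul_sum, mul_comm]

lemma fhat_eq_sum_fhat_piecewise {n : ℕ} (F : (Fin n → Bool) → ℝ) (S : Finset (Fin n)) :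
    fhat F S = (∑ y, fhat (fun x => F (S.piecewise x y)) S) / 2 ^ n := by
  have hsum := sum_sum_piecewise S fun z => F z * chi S z
  simp only [chi_piecewise] at hsum
  simp only [fhat, ← sum_div, hsum]
  field_simp

lemma abs_fhat_restrict_le {n : ℕ} (f : (Fin n → Bool) → Bool) (S : Finset (Fin n))
    (xbar : Fin n → Bool) :
    |fhat (fun x => bToR (restrict f S xbar x)) S|
      ≤ if DT (restrict f S xbar) = S.card then 1 else 0 := by
  split_ifs with h
  · exact abs_fhat_le_one (fun x => abs_bToR_le_one _) S
  · rw [fhat_eq_zero_of_DT_lt ((DT_restrict_le f S xbar).lt_of_ne h), abs_zero]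

/-- `|f̂(S)|` is at most the probability over a uniform assignment of
the fixed variables that the restriction of `f` to `S` has full decision tree depth. -/
theorem stmt2 {n : ℕ} (f : (Fin n → Bool) → Bool) (S : Finset (Fin n)) :
    |fhat (fun x => bToR (f x)) S| ≤ pr (fun xbar => DT (restrict f S xbar) = S.card) := by
  rw [fhat_eq_sum_fhat_piecewise, pr, filter_congr_decidable, abs_div,
    abs_of_pos (by positivity : (0 : ℝ) < 2 ^ n)]
  gcongr
  calc |∑ xbar, fhat (fun x => bToR (f (S.piecewise x xbar))) S|
      ≤ ∑ xbar, |fhat (fun x => bToR (restrict f S xbar x)) S| := abs_sum_le_sum_abs _ _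
    _ ≤ ∑ xbar, if DT (restrict f S xbar) = S.card then (1 : ℝ) else 0 :=
        sum_le_sum fun xbar _ => abs_fhat_restrict_le f S xbar
    _ = _ := sum_boole _ _
end

section
/- Let A₁, …, A_l be finite sets such that |A₁| + ⋯ + |A_l| ≤ v and 2^{-|A₁|} + ⋯ + 2^{-|A_l|} ≤ F, where v > F > 0. Then l ≤ 4v / log₂(v/F). -/
open Finset

/-
Put `L = log₂ (v/F)`. Every set has `|A_r| ≥ L/2` or, since `√x ≥ (log₂ x)/2`,
`2^{-|A_r|} > 2^{-L/2} = √(F/v) ≥ (F/v) · L/2`. By Markov's inequality applied to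
`∑ |A_r| ≤ v` and to `∑ 2^{-|A_r|} ≤ F`, each alternative holds for at most `2v/L` indices.
-/

theorem Finset.card_filter_nsmul_le_sum {ι M : Type*} [AddCommMonoid M] [PartialOrder M]
    [IsOrderedAddMonoid M] [DecidableLE M] (s : Finset ι) (f : ι → M) (a : M)
    (hf : ∀ i ∈ s, 0 ≤ f i) :
    #(s.filter (fun i => a ≤ f i)) • a ≤ ∑ i ∈ s, f i :=
  calc #(s.filter (fun i => a ≤ f i)) • a
      ≤ ∑ i ∈ s.filter (fun i => a ≤ f i), f i :=
        card_nsmul_le_sum _ _ _ fun _ hi => (mem_filter.mp hi).2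
    _ ≤ ∑ i ∈ s, f i :=
        sum_le_sum_of_subset_of_nonneg (filter_subset _ _) fun i hi _ => hf i hi

namespace Real

theorem log_le_mul_log_two {y : ℝ} (hy : 0 < y) : log y ≤ y * log 2 := by
  have h := log_le_sub_one_of_pos (half_pos hy)
  rw [log_div hy.ne' two_ne_zero] at h
  nlinarith [log_two_gt_d9, log_two_lt_d9]

theorem logb_two_le_two_mul_sqrt {x : ℝ} (hx : 0 < x) : logb 2 x ≤ 2 * √x := by
  rw [logb, div_le_iff₀ (log_pos one_lt_two)]
  nlinarith [log_sqrt hx.le, log_le_mul_log_two (sqrt_pos.mpr hx)]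

theorem two_rpow_neg_half_logb {x : ℝ} (hx : 0 < x) : (2 : ℝ) ^ (-(logb 2 x / 2)) = (√x)⁻¹ := by
  rw [rpow_neg zero_le_two, div_eq_mul_one_div, rpow_mul zero_le_two, rpow_logb two_pos
    (by norm_num) hx, sqrt_eq_rpow]

theorem half_logb_two_le_or_le_two_rpow_neg {x : ℝ} (hx : 0 < x) (t : ℝ) :
    logb 2 x / 2 ≤ t ∨ logb 2 x / 2 / x ≤ (2 : ℝ) ^ (-t) := by
  refine or_iff_not_imp_left.mpr fun ht => ?_
  calc logb 2 x / 2 / x ≤ √x / x := by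
        gcongr; linarith [logb_two_le_two_mul_sqrt hx]
    _ = (√x)⁻¹ := sqrt_div_self
    _ = (2 : ℝ) ^ (-(logb 2 x / 2)) := (two_rpow_neg_half_logb hx).symm
    _ ≤ (2 : ℝ) ^ (-t) := rpow_le_rpow_of_exponent_le one_le_two (by linarith)

end Real

/-- If finite sets `A₁, …, A_l` satisfy `∑|A_r| ≤ v` and
`∑ 2^{-|A_r|} ≤ F` with `v > F > 0`, then `l ≤ 4v / log₂(v/F)`. -/
theorem stmt4 {α : Type*} (l : ℕ) (A : Fin l → Finset α) (v F : ℝ)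
    (hF : 0 < F) (hvF : F < v)
    (h1 : ∑ r, ((A r).card : ℝ) ≤ v)
    (h2 : ∑ r, (2 : ℝ) ^ (-((A r).card : ℝ)) ≤ F) :
    (l : ℝ) ≤ 4 * v / Real.logb 2 (v / F) := by
  set L := Real.logb 2 (v / F)
  have hx : 0 < v / F := div_pos (hF.trans hvF) hF
  have hL : 0 < L := Real.logb_pos one_lt_two ((one_lt_div hF).mpr hvF)
  set large := univ.filter fun r => L / 2 ≤ ((A r).card : ℝ)
  set small := univ.filter fun r => L / 2 / (v / F) ≤ (2 : ℝ) ^ (-((A r).card : ℝ))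
  have hunion : large ∪ small = univ := by
    ext r
    simpa [large, small] using Real.half_logb_two_le_or_le_two_rpow_neg hx ((A r).card : ℝ)
  have hcover : l ≤ #large + #small := by
    simpa [hunion] using card_union_le large small
  have hlarge : #large * (L / 2) ≤ v := by
    simpa only [nsmul_eq_mul] using
      (card_filter_nsmul_le_sum univ _ _ fun r _ => by positivity).trans h1
  have hsmall : #small * (L / 2 / (v / F)) ≤ F := by
    simpa only [nsmul_eq_mul] using
      (card_filter_nsmul_le_sum univ _ _ fun r _ => by positivity).trans h2
  have hsmall' : #small * (L / 2) ≤ v :=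
    calc #small * (L / 2) = #small * (L / 2 / (v / F)) * (v / F) := by
          rw [mul_assoc, div_mul_cancel₀ _ hx.ne']
      _ ≤ F * (v / F) := by gcongr
      _ = v := mul_div_cancel₀ v hF.ne'
  have hcover' : (l : ℝ) * L ≤ (#large + #small) * L :=
    mul_le_mul_of_nonneg_right (by exact_mod_cast hcover) hL.le
  rw [le_div_iff₀ hL]
  linarith
end

section
/- Let f = T₁ ∨ ⋯ ∨ T_s be a read-k DNF over {-1,1}^n where each term T_j queries |T_j| variables. Then ∑_{j=1}^s 2^{-|T_j|} ≤ k · ln(1/(1 − Pr_x[f(x) = 1])), where x is uniform on {-1,1}^n. -/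
open Finset

/-- A DNF term on `n` variables: a set of variables together with the required
sign for each (a term is a conjunction of literals). -/
abbrev Term (n : ℕ) := Finset (Fin n) × (Fin n → Bool)

/-- A term is satisfied when all its literals hold. -/
def termSat {n : ℕ} (T : Term n) (x : Fin n → Bool) : Prop :=
  ∀ i ∈ T.1, x i = T.2 i

/-- Evaluation of the DNF given by a family of terms. -/
def dnfEval {n s : ℕ} (terms : Fin s → Term n) (x : Fin n → Bool) : Prop :=
  ∃ j, termSat (terms j) x

/-- A family of terms is read-`k` if every variable occurs in at most `k` terms. -/
def ReadK {n s : ℕ} (terms : Fin s → Term n) (k : ℕ) : Prop :=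
  ∀ i : Fin n, (Finset.univ.filter fun j => i ∈ (terms j).1).card ≤ k

/-!
Each term `T_j` fails with probability `1 - 2^{-|T_j|}`, and since every coordinate occurs in at
most `k` terms, Finner's generalised Hölder inequality with all exponents `1/k` gives
`Pr[f = 0] ≤ ∏_j (1 - 2^{-|T_j|})^{1/k}`. That inequality is proved by resampling one coordinate
at a time; a single step is weighted AM-GM for the two values of the coordinate. Taking logarithms
and using `log (1 - q) ≤ -q` finishes the proof.
-/

open Function Real
open scoped BigOperators

theorem Real.geom_mean_le_arith_mean_weighted_of_sum_le {ι : Type*} (s : Finset ι) (w z : ι → ℝ)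
    (hw : ∀ i ∈ s, 0 ≤ w i) (hw' : ∑ i ∈ s, w i ≤ 1) (hz : ∀ i ∈ s, 0 ≤ z i) :
    ∏ i ∈ s, z i ^ w i ≤ ∑ i ∈ s, w i * z i + (1 - ∑ i ∈ s, w i) := by
  -- give the missing weight `1 - ∑ w` to an extra point of value `1`
  have := geom_mean_le_arith_mean_weighted s.insertNone (Option.elim · (1 - ∑ i ∈ s, w i) w)
    (Option.elim · 1 z) (by rintro (_ | i) hi <;> simp_all) (by simp)
    (by rintro (_ | i) hi <;> simp_all)
  simpa [add_comm] using this

theorem prod_rpow_add_prod_rpow_le {ι : Type*} (s : Finset ι) (w a b : ι → ℝ)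
    (hw : ∀ i ∈ s, 0 ≤ w i) (hw' : ∑ i ∈ s, w i ≤ 1)
    (ha : ∀ i ∈ s, 0 ≤ a i) (hb : ∀ i ∈ s, 0 ≤ b i) :
    ∏ i ∈ s, a i ^ w i + ∏ i ∈ s, b i ^ w i ≤ 2 * ∏ i ∈ s, ((a i + b i) / 2) ^ w i := by
  set c := fun i => (a i + b i) / 2
  have hc : ∀ i ∈ s, 0 ≤ c i := fun i hi => by positivity [ha i hi, hb i hi]
  have factor : ∀ d : ι → ℝ, (∀ i ∈ s, 0 ≤ d i ∧ d i ≤ 2 * c i) →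
      ∏ i ∈ s, d i ^ w i = (∏ i ∈ s, (d i / c i) ^ w i) * ∏ i ∈ s, c i ^ w i := by
    intro d hd
    rw [← prod_mul_distrib]
    refine prod_congr rfl fun i hi => ?_
    rw [← mul_rpow (div_nonneg (hd i hi).1 (hc i hi)) (hc i hi),
      div_mul_cancel_of_imp fun h => by linarith [hd i hi]]
  have amgm : ∏ i ∈ s, (a i / c i) ^ w i + ∏ i ∈ s, (b i / c i) ^ w i ≤ 2 := by
    have hsum : ∑ i ∈ s, w i * (a i / c i) + ∑ i ∈ s, w i * (b i / c i) ≤ 2 * ∑ i ∈ s, w i := by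
      rw [← sum_add_distrib, mul_sum]
      refine sum_le_sum fun i hi => ?_
      rw [← mul_add, ← add_div, mul_comm 2]
      refine mul_le_mul_of_nonneg_left ?_ (hw i hi)
      rcases (hc i hi).eq_or_lt with h | h
      · simp [← h]
      · rw [div_le_iff₀ h]
        simp only [c]
        linarith
    linarith [geom_mean_le_arith_mean_weighted_of_sum_le s w (fun i => a i / c i) hw hw'
        fun i hi => div_nonneg (ha i hi) (hc i hi),
      geom_mean_le_arith_mean_weighted_of_sum_le s w (fun i => b i / c i) hw hw'
        fun i hi => div_nonneg (hb i hi) (hc i hi)]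
  rw [factor a fun i hi => ⟨ha i hi, by simp only [c]; linarith [hb i hi]⟩,
    factor b fun i hi => ⟨hb i hi, by simp only [c]; linarith [ha i hi]⟩, ← add_mul]
  exact mul_le_mul_of_nonneg_right amgm (prod_nonneg fun i hi => rpow_nonneg (hc i hi) _)

theorem prod_rpow_add_prod_rpow_le_of_eqOn_compl {ι : Type*} [Fintype ι] [DecidableEq ι]
    (s : Finset ι) (w a b : ι → ℝ) (hw : ∀ i ∈ s, 0 ≤ w i) (hw' : ∑ i ∈ s, w i ≤ 1)
    (ha : ∀ i, 0 ≤ a i) (hb : ∀ i, 0 ≤ b i) (hab : ∀ i ∉ s, a i = b i) :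
    ∏ i, a i ^ w i + ∏ i, b i ^ w i ≤ 2 * ∏ i, ((a i + b i) / 2) ^ w i := by
  have hcompl : ∀ i ∈ sᶜ, a i ^ w i = b i ^ w i ∧ a i ^ w i = ((a i + b i) / 2) ^ w i :=
    fun i hi => by rw [← hab i (mem_compl.1 hi), add_self_div_two]; simp
  rw [← prod_mul_prod_compl s, ← prod_mul_prod_compl s (fun i => b i ^ w i),
    ← prod_mul_prod_compl s (fun i => ((a i + b i) / 2) ^ w i),
    ← prod_congr rfl fun i hi => (hcompl i hi).1, ← prod_congr rfl fun i hi => (hcompl i hi).2,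
    ← add_mul, ← mul_assoc]
  exact mul_le_mul_of_nonneg_right
    (prod_rpow_add_prod_rpow_le s w a b hw hw' (fun i _ => ha i) fun i _ => hb i)
    (prod_nonneg fun i _ => rpow_nonneg (ha i) _)

section Finner

variable {ι κ : Type*} [Fintype ι] [DecidableEq ι]

/-- The conditional expectation of `f` given the coordinates of `x` outside `u`. -/
noncomputable def avgOver (u : Finset ι) (f : (ι → Bool) → ℝ) (x : ι → Bool) : ℝ :=
  𝔼 y, f (u.piecewise y x)

theorem avgOver_empty (f : (ι → Bool) → ℝ) (x : ι → Bool) : avgOver ∅ f x = f x := by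
  simp [avgOver]

theorem avgOver_univ (f : (ι → Bool) → ℝ) (x : ι → Bool) : avgOver univ f x = 𝔼 y, f y := by
  simp [avgOver]

theorem avgOver_nonneg {f : (ι → Bool) → ℝ} (hf : ∀ z, 0 ≤ f z) (u : Finset ι) (x : ι → Bool) :
    0 ≤ avgOver u f x :=
  expect_nonneg fun _ _ => hf _

theorem DependsOn.avgOver {f : (ι → Bool) → ℝ} {S : Set ι} (hf : DependsOn f S) (u : Finset ι) :
    DependsOn (avgOver u f) S := fun x x' h => by
  refine expect_congr rfl fun y _ => hf fun i hi => ?_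
  by_cases hu : i ∈ u <;> simp [hu, h i hi]

theorem avgOver_insert {i : ι} {u : Finset ι} (hi : i ∉ u) (f : (ι → Bool) → ℝ) (x : ι → Bool) :
    avgOver (insert i u) f x =
      (avgOver u f (update x i false) + avgOver u f (update x i true)) / 2 := by
  set G : (ι → Bool) → Bool → ℝ := fun y b => f (u.piecewise y (update x i b))
  have hG : avgOver (insert i u) f x = 𝔼 y, G y (y i) := by
    simp only [avgOver, piecewise_insert, update_piecewise_of_notMem (hi := hi), G]
  have hGi : ∀ y c b, G (update y i c) b = G y b := fun y c b => by
    simp only [G]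
    rw [u.piecewise_congr (fun l hl => update_of_ne (ne_of_mem_of_not_mem hl hi) _ _)
      fun _ _ => rfl]
  have hinv : Involutive fun y : ι → Bool => update y i (!y i) := fun y => by simp
  have hflip : 𝔼 y, G y (y i) = 𝔼 y, G y (!y i) :=
    Fintype.expect_equiv hinv.toPerm _ _ fun y => by simp [hGi]
  rw [hG, eq_div_iff two_ne_zero, mul_two]
  nth_rewrite 2 [hflip]
  rw [← expect_add_distrib, avgOver, avgOver, ← expect_add_distrib]
  refine expect_congr rfl fun y _ => ?_
  cases y i <;> simp [G, add_comm]

theorem avgOver_prod_rpow_le [Fintype κ] (S : κ → Finset ι) (w : κ → ℝ)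
    (hw : ∀ j, 0 ≤ w j) (hS : ∀ i, ∑ j with i ∈ S j, w j ≤ 1) (f : κ → (ι → Bool) → ℝ)
    (hf : ∀ j z, 0 ≤ f j z) (hdep : ∀ j, DependsOn (f j) (S j)) (u : Finset ι) (x : ι → Bool) :
    avgOver u (fun z => ∏ j, f j z ^ w j) x ≤ ∏ j, avgOver u (f j) x ^ w j := by
  induction u using Finset.induction_on generalizing x with
  | empty => simp [avgOver_empty]
  | insert i u hi ih =>
    classical
    simp only [avgOver_insert hi]
    set a := fun j => avgOver u (f j) (update x i false)
    set b := fun j => avgOver u (f j) (update x i true)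
    have hab : ∀ j ∉ ({j | i ∈ S j} : Finset κ), a j = b j := fun j hj =>
      (hdep j).avgOver u fun l hl => by
        rw [update_of_ne (ne_of_mem_of_not_mem hl (by simpa using hj)),
          update_of_ne (ne_of_mem_of_not_mem hl (by simpa using hj))]
    have := prod_rpow_add_prod_rpow_le_of_eqOn_compl _ w a b (fun j _ => hw j) (hS i)
      (fun j => avgOver_nonneg (hf j) _ _) (fun j => avgOver_nonneg (hf j) _ _) hab
    linarith [ih (update x i false), ih (update x i true)]

theorem expect_prod_rpow_le_prod_expect_rpow [Fintype κ] (S : κ → Finset ι)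
    (w : κ → ℝ) (hw : ∀ j, 0 ≤ w j) (hS : ∀ i, ∑ j with i ∈ S j, w j ≤ 1) (f : κ → (ι → Bool) → ℝ)
    (hf : ∀ j z, 0 ≤ f j z) (hdep : ∀ j, DependsOn (f j) (S j)) :
    𝔼 z, ∏ j, f j z ^ w j ≤ ∏ j, (𝔼 z, f j z) ^ w j := by
  simpa [avgOver_univ] using
    avgOver_prod_rpow_le S w hw hS f hf hdep univ (fun _ => false)

end Finner

theorem sum_le_mul_log_inv_of_le_prod_one_sub_rpow {ι : Type*} (s : Finset ι) (q : ι → ℝ)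
    {k P : ℝ} (hk : 0 < k) (hP : 0 < P) (hq : ∀ j ∈ s, q j ≤ 1)
    (h : P ≤ ∏ j ∈ s, (1 - q j) ^ k⁻¹) :
    ∑ j ∈ s, q j ≤ k * log (1 / P) := by
  have hexp : P ≤ exp (∑ j ∈ s, -q j * k⁻¹) := by
    refine h.trans ?_
    rw [exp_sum]
    refine prod_le_prod (fun j hj => rpow_nonneg (sub_nonneg.2 (hq j hj)) _) fun j hj => ?_
    rw [exp_mul]
    exact rpow_le_rpow (sub_nonneg.2 (hq j hj)) (one_sub_le_exp_neg _) (inv_nonneg.2 hk.le)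
  rw [← log_le_iff_le_exp hP, ← sum_mul, sum_neg_distrib, neg_mul, ← div_eq_mul_inv, le_neg,
    div_le_iff₀ hk] at hexp
  rwa [one_div, log_inv, mul_comm]

theorem pr_eq_expect {n : ℕ} (P : (Fin n → Bool) → Prop) [DecidablePred P] :
    pr P = 𝔼 x, if P x then (1 : ℝ) else 0 := by
  rw [pr, Fintype.expect_eq_sum_div_card, sum_boole, Fintype.card_fun, Fintype.card_bool,
    Fintype.card_fin, Nat.cast_pow, Nat.cast_two]
  congr

theorem pr_not {n : ℕ} (P : (Fin n → Bool) → Prop) : pr (fun x => ¬ P x) = 1 - pr P := by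
  classical
  rw [pr_eq_expect, pr_eq_expect, eq_sub_iff_add_eq, ← expect_add_distrib]
  refine (expect_congr rfl fun x _ => ?_).trans Fintype.expect_one
  split_ifs <;> simp_all

theorem pr_termSat {n : ℕ} (T : Term n) : pr (termSat T) = 2 ^ (-(#T.1 : ℝ)) := by
  classical
  have hfilter : univ.filter (termSat T) =
      Fintype.piFinset fun i => if i ∈ T.1 then {T.2 i} else univ := by
    ext x
    simp only [mem_filter, mem_univ, true_and, Fintype.mem_piFinset, termSat]
    refine forall_congr' fun i => ?_
    split_ifs <;> simp [*]
  have hcard : ∀ i, (#(if i ∈ T.1 then {T.2 i} else univ) : ℝ) / 2 = if i ∈ T.1 then 2⁻¹ else 1 :=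
    fun i => by split_ifs <;> simp
  unfold pr
  rw [hfilter, Fintype.card_piFinset, Nat.cast_prod, ← Fin.prod_const, ← prod_div_distrib]
  simp only [hcard, prod_ite_mem, univ_inter, prod_const, rpow_neg zero_le_two,
    rpow_natCast, inv_pow]

theorem ReadK.pr_dnfEval_eq_one_of_zero {n s : ℕ} {terms : Fin s → Term n} (h : ReadK terms 0)
    (j : Fin s) : pr (dnfEval terms) = 1 := by
  classical
  have hsat : ∀ x, dnfEval terms x := fun x => ⟨j, fun i hi => absurd (h i) (by
    rw [Nat.le_zero, card_eq_zero, eq_empty_iff_forall_notMem, not_forall]; exact ⟨j, by simpa⟩)⟩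
  simp [pr_eq_expect, hsat]

theorem ReadK.pr_not_dnfEval_le {n s k : ℕ} {terms : Fin s → Term n} (hread : ReadK terms k)
    (hk : 0 < k) :
    pr (fun x => ¬ dnfEval terms x) ≤ ∏ j, pr (fun x => ¬ termSat (terms j) x) ^ (k⁻¹ : ℝ) := by
  classical
  have hw : (k⁻¹ : ℝ) ≠ 0 := by positivity
  have hprod : ∀ x, ∏ j, (if ¬ termSat (terms j) x then (1 : ℝ) else 0) ^ (k⁻¹ : ℝ) =
      if ¬ dnfEval terms x then 1 else 0 := fun x => by
    simp only [apply_ite (· ^ (k⁻¹ : ℝ)), one_rpow, zero_rpow hw]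
    rw [Fintype.prod_boole]
    simp [dnfEval]
  simp only [pr_eq_expect, ← hprod]
  refine expect_prod_rpow_le_prod_expect_rpow (fun j => (terms j).1) _ (fun _ => by positivity)
    (fun i => ?_) _ (fun j x => by split_ifs <;> norm_num) fun j x y hxy => ?_
  · rw [sum_const, nsmul_eq_mul]
    exact mul_inv_le_one_of_le₀ (by exact_mod_cast hread i) (by positivity)
  · have : termSat (terms j) x ↔ termSat (terms j) y := forall₂_congr fun i hi => by rw [hxy i hi]
    simp only [this]

/-- For a read-`k` DNF with `Pr[f = 1] < 1`,
`∑_j 2^{-|T_j|} ≤ k · ln(1/(1 − Pr[f = 1]))`. -/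
theorem stmt10 {n s : ℕ} (terms : Fin s → Term n) (k : ℕ) (hread : ReadK terms k)
    (hbias : pr (dnfEval terms) < 1) :
    ∑ j : Fin s, (2 : ℝ) ^ (-((terms j).1.card : ℝ))
      ≤ k * Real.log (1 / (1 - pr (dnfEval terms))) := by
  rcases Nat.eq_zero_or_pos k with rfl | hk
  · have : IsEmpty (Fin s) := ⟨fun j => hbias.ne (hread.pr_dnfEval_eq_one_of_zero j)⟩
    simp
  have hbound := hread.pr_not_dnfEval_le hk
  simp only [pr_not, pr_termSat] at hbound
  exact sum_le_mul_log_inv_of_le_prod_one_sub_rpow _ _ (by positivity) (sub_pos.2 hbias)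
    (fun j _ => rpow_le_one_of_one_le_of_nonpos one_le_two (by simp)) hbound
end

section
/- Let f : {-1,1}^n → {0,1} and suppose S ⊆ [n] is such that the restriction f_{S|x_{S̄}} has decision tree depth |S| for some assignment x_{S̄} to the variables outside S, where f is computed by a DNF T₁ ∨ ⋯ ∨ T_s. Then there exists a set 𝒯 of at most |S| terms of f, each of which is neither fixed to 0 nor to 1 by x_{S̄}, whose union of variable sets contains S. -/
open Finset

/-
If some `i ∈ S` lay in no term that survives `xbar` outside `S`, then every term containing `i`
is falsified by `xbar`, so the restriction of `f` ignores `x_i`; querying the remaining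
`|S| - 1` variables of `S` would then compute it, contradicting full depth `|S|`. Choosing one
surviving term through each `i ∈ S` gives the cover.
-/

theorem exists_card_le_cover_of_forall_mem {ι α : Type*} [DecidableEq ι] [DecidableEq α]
    (S : Finset α) (A : ι → Finset α) (P : ι → Prop) (h : ∀ i ∈ S, ∃ j, i ∈ A j ∧ P j) :
    ∃ 𝒯 : Finset ι, #𝒯 ≤ #S ∧ (∀ j ∈ 𝒯, P j ∧ (A j ∩ S).Nonempty) ∧ S ⊆ 𝒯.biUnion A := by
  choose c hcA hcP using h
  refine ⟨S.attach.image fun i => c i.1 i.2, card_image_le.trans card_attach.le, ?_, ?_⟩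
  · simp only [mem_image, mem_attach, true_and, forall_exists_index]
    rintro _ ⟨i, hi⟩ rfl
    exact ⟨hcP i hi, i, mem_inter.mpr ⟨hcA i hi, hi⟩⟩
  · intro i hi
    exact mem_biUnion.mpr ⟨c i hi, mem_image_of_mem _ (mem_attach _ ⟨i, hi⟩), hcA i hi⟩

namespace DTree

theorem exists_eval_eq_of_dependsOn {n : ℕ} (A : Finset (Fin n)) {g : (Fin n → Bool) → Bool}
    (hg : DependsOn g ↑A) : ∃ t : DTree n, (∀ x, t.eval x = g x) ∧ t.depth ≤ #A := by
  induction A using Finset.induction_on generalizing g with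
  | empty => exact ⟨.leaf (g fun _ => false), fun x => hg (by simp), le_rfl⟩
  | @insert i B hiB ih =>
    have hgb (b : Bool) : DependsOn (fun x => g (Function.update x i b)) ↑B := by
      intro x y hxy
      refine hg fun k hk => ?_
      rcases eq_or_ne k i with rfl | hki
      · simp
      · simpa [Function.update_of_ne hki] using hxy k (by simpa [hki] using hk)
    obtain ⟨t₁, he₁, hd₁⟩ := ih (hgb true)
    obtain ⟨t₀, he₀, hd₀⟩ := ih (hgb false)
    refine ⟨.node i t₁ t₀, fun x => ?_, ?_⟩
    · cases hxi : x i <;>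
        simp only [eval, hxi, he₀, he₁, if_true, Bool.false_eq_true, if_false] <;>
        rw [← hxi, Function.update_eq_self]
    · simp only [depth, card_insert_of_notMem hiB]
      omega

end DTree

theorem DT_le_card_of_dependsOn {n : ℕ} {g : (Fin n → Bool) → Bool} {A : Finset (Fin n)}
    (hg : DependsOn g ↑A) : DT g ≤ #A :=
  let ⟨t, ht, hd⟩ := DTree.exists_eval_eq_of_dependsOn A hg
  Nat.sInf_le ⟨t, ht, hd⟩

theorem not_dependsOn_erase_of_DT_eq_card {n : ℕ} {g : (Fin n → Bool) → Bool}
    {S : Finset (Fin n)} (hDT : DT g = #S) {i : Fin n} (hi : i ∈ S) :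
    ¬DependsOn g ↑(S.erase i) := fun hg => by
  have := DT_le_card_of_dependsOn hg
  rw [hDT, card_erase_of_mem hi] at this
  have := card_pos.mpr ⟨i, hi⟩
  omega

def Term.Unfalsified {n : ℕ} (T : Term n) (S : Finset (Fin n)) (xbar : Fin n → Bool) : Prop :=
  ∀ i ∈ T.1, i ∉ S → xbar i = T.2 i

section Restriction

variable {n : ℕ} (T : Term n) (S : Finset (Fin n)) (xbar : Fin n → Bool)

theorem dependsOn_termSat_restrict :
    DependsOn (fun x => termSat T fun k => if k ∈ S then x k else xbar k) ↑(T.1 ∩ S) := by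
  intro x y hxy
  simp only [termSat, eq_iff_iff]
  refine forall₂_congr fun k hk => ?_
  split_ifs with hkS
  · rw [hxy k (mem_inter.mpr ⟨hk, hkS⟩)]
  · rfl

variable {T S xbar}

theorem not_termSat_restrict_of_not_unfalsified (hT : ¬T.Unfalsified S xbar)
    (x : Fin n → Bool) : ¬termSat T fun k => if k ∈ S then x k else xbar k := by
  intro hsat
  obtain ⟨k, hk, hkS, hne⟩ : ∃ k ∈ T.1, k ∉ S ∧ xbar k ≠ T.2 k := by
    simpa [Term.Unfalsified] using hT
  simpa [hkS, hne] using hsat k hk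

end Restriction

theorem dependsOn_restrict_erase_of_forall_not_unfalsified {n s : ℕ}
    {f : (Fin n → Bool) → Bool} {terms : Fin s → Term n}
    (hf : ∀ x, f x = true ↔ dnfEval terms x) {S : Finset (Fin n)} {xbar : Fin n → Bool}
    {i : Fin n} (hi : ∀ j, i ∈ (terms j).1 → ¬(terms j).Unfalsified S xbar) :
    DependsOn (restrict f S xbar) ↑(S.erase i) := by
  intro x y hxy
  simp only [_root_.restrict, Bool.eq_iff_iff, hf]
  refine exists_congr fun j => ?_
  by_cases hij : i ∈ (terms j).1
  · exact iff_of_false (not_termSat_restrict_of_not_unfalsified (hi j hij) x)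
      (not_termSat_restrict_of_not_unfalsified (hi j hij) y)
  · refine Iff.of_eq <| dependsOn_termSat_restrict (terms j) S xbar fun k hk => hxy k ?_
    obtain ⟨hkT, hkS⟩ := mem_inter.mp hk
    exact mem_erase.mpr ⟨fun hki => hij (hki ▸ hkT), hkS⟩

/-- If the restriction of a DNF `f` to free variables `S` at `xbar`
has full decision tree depth `|S|`, then `S` is covered by the variable sets of at most
`|S|` terms, each of which is alive (neither falsified nor already satisfied) under
`xbar`. -/
theorem stmt16 {n s : ℕ} (f : (Fin n → Bool) → Bool) (terms : Fin s → Term n)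
    (hf : ∀ x, f x = true ↔ dnfEval terms x)
    (S : Finset (Fin n)) (xbar : Fin n → Bool)
    (hDT : DT (restrict f S xbar) = S.card) :
    ∃ 𝒯 : Finset (Fin s), 𝒯.card ≤ S.card ∧
      (∀ j ∈ 𝒯, (∀ i ∈ (terms j).1, i ∉ S → xbar i = (terms j).2 i) ∧
        ((terms j).1 ∩ S).Nonempty) ∧
      S ⊆ 𝒯.biUnion fun j => (terms j).1 := by
  refine exists_card_le_cover_of_forall_mem S (fun j => (terms j).1)
    (fun j => (terms j).Unfalsified S xbar) fun i hi => ?_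
  by_contra! hnone
  exact not_dependsOn_erase_of_DT_eq_card hDT hi
    (dependsOn_restrict_erase_of_forall_not_unfalsified hf hnone)
end
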